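/- Let f : {0,1}^n → {−1,1}, β_f(s) = 2^{-n} ∑_ε (−1)^{ε·s} f(ε), and let W_f = ∑_{s ∈ {0,1}^n} β_f(s) σ(θ_{s₁}^1) ⊗ ⋯ ⊗ σ(θ_{sₙ}^n) with σ(θ) = [[0, e^{-iθ}],[e^{iθ},0]] and arbitrary angles θ_s^j ∈ ℝ. Then the operator norm of W_f is at most 2^{n/2}. -/

import Mathlib

open Matrix Finset Complex
open scoped Matrix.Norms.L2Operator

/-- The sign `±1` encoded by a Boolean (`true ↦ 1`, `false ↦ −1`). -/
def sgn (b : Bool) : ℝ := if b then 1 else -1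

/-- `(-1)^{ε·s}` for binary vectors `ε s : Fin n → Bool`. -/
def signChar (n : ℕ) (ε s : Fin n → Bool) : ℝ :=
  ∏ j : Fin n, (if ε j ∧ s j then (-1 : ℝ) else 1)

/-- The Werner–Wolf Fourier coefficient `β_f(s) = 2⁻ⁿ ∑_ε (-1)^{ε·s} f(ε)`. -/
noncomputable def wwBeta (n : ℕ) (f : (Fin n → Bool) → ℝ) (s : Fin n → Bool) : ℝ :=
  (2 : ℝ)⁻¹ ^ n * ∑ ε : Fin n → Bool, signChar n ε s * f ε

/-- The coplanar spin matrix `σ(θ) = [[0, e^{−iθ}],[e^{iθ},0]]`, with rows/columns indexed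
by `Bool` (`true ↦ |1⟩`, `false ↦ |−1⟩`). -/
noncomputable def sigmaB (θ : ℝ) : Matrix Bool Bool ℂ :=
  Matrix.of fun x y => if x = !y then Complex.exp ((sgn y : ℂ) * θ * Complex.I) else 0

/-- The Werner–Wolf operator `W_f = ∑_s β_f(s) σ(θ_{s₁}¹) ⊗ ⋯ ⊗ σ(θ_{sₙ}ⁿ)`,
where the row index `s` ranges over `{0,1}ⁿ` (`s : Fin n → Bool`). -/
noncomputable def wwOp (n : ℕ) (f : (Fin n → Bool) → ℝ) (θ : Bool → Fin n → ℝ) :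
    Matrix (Fin n → Bool) (Fin n → Bool) ℂ :=
  ∑ s : Fin n → Bool,
    (wwBeta n f s : ℂ) •
      Matrix.of fun x y : Fin n → Bool => ∏ j : Fin n, sigmaB (θ (s j) j) (x j) (y j)

/-!
Each term `σ(θ_{s₁}¹) ⊗ ⋯ ⊗ σ(θ_{sₙ}ⁿ)` is supported on the positions `(x, y)` with `y` the
bitwise negation of `x`, so `W_f = D P` with `P` the permutation matrix of the global bit flip and `D` diagonal with entries of modulus at most `∑_s |β_f(s)|`. By
Cauchy–Schwarz and Parseval (`∑_s β_f(s)² = 2⁻ⁿ ∑_ε f(ε)² = 1`) this `ℓ¹` norm is at most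
`2^{n/2}`.
-/

namespace Matrix

variable {m : Type*} [Fintype m] [DecidableEq m]

lemma eq_diagonal_mul_permMatrix_of_apply_eq_zero {R : Type*} [NonAssocSemiring R]
    {A : Matrix m m R} (σ : Equiv.Perm m) (hA : ∀ x y, σ x ≠ y → A x y = 0) :
    A = diagonal (fun x => A x (σ x)) * σ.permMatrix R := by
  ext x y
  by_cases h : σ x = y
  · simp [h]
  · simp [hA x y h, h]

lemma l2_opNorm_le_of_apply_eq_zero {𝕜 : Type*} [RCLike 𝕜] {A : Matrix m m 𝕜}
    (σ : Equiv.Perm m) {C : ℝ} (hC : 0 ≤ C)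
    (hA : ∀ x y, σ x ≠ y → A x y = 0) (hAC : ∀ x, ‖A x (σ x)‖ ≤ C) : ‖A‖ ≤ C :=
  calc ‖A‖ = ‖diagonal (fun x => A x (σ x)) * σ.permMatrix 𝕜‖ := by
        rw [← eq_diagonal_mul_permMatrix_of_apply_eq_zero σ hA]
    _ ≤ ‖fun x => A x (σ x)‖ * 1 := by
        grw [l2_opNorm_mul, l2_opNorm_diagonal, permMatrix_l2_opNorm_le]
    _ ≤ C := by simpa using (pi_norm_le_iff_of_nonneg hC).2 hAC

end Matrix

lemma sum_signChar_mul_signChar (n : ℕ) (ε ε' : Fin n → Bool) :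
    ∑ s, signChar n ε s * signChar n ε' s = if ε = ε' then (2 : ℝ) ^ n else 0 := by
  have hcoord : ∀ j, ∑ b : Bool, (if ε j ∧ b then (-1 : ℝ) else 1) *
      (if ε' j ∧ b then (-1 : ℝ) else 1) = if ε j = ε' j then 2 else 0 := fun j => by
    cases ε j <;> cases ε' j <;> norm_num
  have hfactor : ∑ s, signChar n ε s * signChar n ε' s = ∏ j, ∑ b : Bool,
      (if ε j ∧ b then (-1 : ℝ) else 1) * (if ε' j ∧ b then (-1 : ℝ) else 1) := by
    simp only [Fintype.prod_sum, signChar, prod_mul_distrib]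
  simp only [hfactor, hcoord]
  split_ifs with h
  · simp [h]
  · obtain ⟨j, hj⟩ := Function.ne_iff.mp h
    exact prod_eq_zero (mem_univ j) (if_neg hj)

lemma sum_wwBeta_sq (n : ℕ) (f : (Fin n → Bool) → ℝ) :
    ∑ s, wwBeta n f s ^ 2 = (2 : ℝ)⁻¹ ^ n * ∑ ε, f ε ^ 2 := by
  have hexpand : ∀ s, wwBeta n f s ^ 2 = ((2 : ℝ)⁻¹ ^ n) ^ 2 *
      ∑ ε, ∑ ε', f ε * f ε' * (signChar n ε s * signChar n ε' s) := fun s => by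
    rw [wwBeta, mul_pow, sq (∑ ε, _), sum_mul_sum]
    congr! 3 with ε _ ε' _
    ring
  calc ∑ s, wwBeta n f s ^ 2
      = ((2 : ℝ)⁻¹ ^ n) ^ 2 * ∑ ε, ∑ ε', f ε * f ε' * ∑ s, signChar n ε s * signChar n ε' s := by
        rw [sum_congr rfl fun s _ => hexpand s, ← mul_sum, sum_comm]
        congr! 2 with ε _
        rw [sum_comm]
        simp_rw [mul_sum]
    _ = (2 : ℝ)⁻¹ ^ n * ∑ ε, f ε ^ 2 := by
        simp_rw [sum_signChar_mul_signChar, mul_ite, mul_zero, sum_ite_eq, mem_univ, if_true,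
          ← sum_mul, ← sq]
        have hinv : (2 : ℝ)⁻¹ ^ n * 2 ^ n = 1 := by rw [← mul_pow]; norm_num
        linear_combination (2⁻¹ ^ n * ∑ ε, f ε ^ 2) * hinv

lemma sq_sum_abs_wwBeta_le (n : ℕ) (f : (Fin n → Bool) → ℝ) :
    (∑ s, |wwBeta n f s|) ^ 2 ≤ ∑ ε, f ε ^ 2 :=
  calc (∑ s, |wwBeta n f s|) ^ 2 ≤ 2 ^ n * ∑ s, |wwBeta n f s| ^ 2 := by
        simpa using sq_sum_le_card_mul_sum_sq (s := univ) (f := fun s => |wwBeta n f s|)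
    _ = ∑ ε, f ε ^ 2 := by
        simp_rw [sq_abs, sum_wwBeta_sq, ← mul_assoc, ← mul_pow]
        norm_num

lemma sigmaB_apply_eq_zero (θ : ℝ) {x y : Bool} (h : x ≠ !y) : sigmaB θ x y = 0 :=
  if_neg h

lemma norm_sigmaB_apply_le (θ : ℝ) (x y : Bool) : ‖sigmaB θ x y‖ ≤ 1 := by
  rw [sigmaB, of_apply]
  split_ifs
  · rw [← ofReal_mul, norm_exp_ofReal_mul_I]
  · simp

lemma wwOp_apply (n : ℕ) (f : (Fin n → Bool) → ℝ) (θ : Bool → Fin n → ℝ) (x y : Fin n → Bool) :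
    wwOp n f θ x y = ∑ s, (wwBeta n f s : ℂ) * ∏ j, sigmaB (θ (s j) j) (x j) (y j) := by
  simp [wwOp, Matrix.sum_apply]

lemma wwOp_apply_eq_zero (n : ℕ) (f : (Fin n → Bool) → ℝ) (θ : Bool → Fin n → ℝ)
    {x y : Fin n → Bool} (h : (fun j => !x j) ≠ y) : wwOp n f θ x y = 0 := by
  obtain ⟨j, hj⟩ := Function.ne_iff.mp h
  refine (wwOp_apply n f θ x y).trans (sum_eq_zero fun s _ => ?_)
  rw [prod_eq_zero (mem_univ j) (sigmaB_apply_eq_zero _ fun hx => hj (by simp [hx])), mul_zero]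

lemma norm_wwOp_apply_le (n : ℕ) (f : (Fin n → Bool) → ℝ) (θ : Bool → Fin n → ℝ)
    (x y : Fin n → Bool) : ‖wwOp n f θ x y‖ ≤ ∑ s, |wwBeta n f s| := by
  rw [wwOp_apply]
  refine (norm_sum_le _ _).trans (sum_le_sum fun s _ => ?_)
  rw [norm_mul, norm_real, Real.norm_eq_abs, norm_prod]
  exact mul_le_of_le_one_right (abs_nonneg _)
    (prod_le_one (fun _ _ => norm_nonneg _) fun j _ => norm_sigmaB_apply_le _ _ _)

/-- for `f : {0,1}ⁿ → {−1,1}` and arbitrary angles, `‖W_f‖ ≤ 2^{n/2}`. -/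
theorem wwOp_norm_le (n : ℕ) (f : (Fin n → Bool) → ℝ)
    (hf : ∀ ε, f ε = 1 ∨ f ε = -1) (θ : Bool → Fin n → ℝ) :
    ‖wwOp n f θ‖ ≤ (2 : ℝ) ^ ((n : ℝ) / 2) := by
  have hsq : ∑ ε, f ε ^ 2 = 2 ^ n :=
    calc ∑ ε, f ε ^ 2 = ∑ _ε : Fin n → Bool, (1 : ℝ) :=
          sum_congr rfl fun ε _ => by rcases hf ε with h | h <;> simp [h]
      _ = 2 ^ n := by simp
  calc ‖wwOp n f θ‖ ≤ ∑ s, |wwBeta n f s| :=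
        l2_opNorm_le_of_apply_eq_zero (Equiv.piCongrRight fun _ => Equiv.boolNot)
          (sum_nonneg fun s _ => abs_nonneg _) (fun _ _ => wwOp_apply_eq_zero n f θ)
          (fun x => norm_wwOp_apply_le n f θ x _)
    _ ≤ √2 ^ n := by
        refine le_of_sq_le_sq ?_ (by positivity)
        rw [← pow_mul, mul_comm, pow_mul, Real.sq_sqrt zero_le_two, ← hsq]
        exact sq_sum_abs_wwBeta_le n f
    _ = (2 : ℝ) ^ ((n : ℝ) / 2) := by
        rw [Real.rpow_div_two_eq_sqrt _ zero_le_two, Real.rpow_natCast]
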